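/- Fix ε > 0 and δ ∈ (0,1), assume N is nonempty, and let m = ⌈(|N|² / (2ε²)) · ln(2^{|P|+1} / δ)⌉. Then for any fixed S ⊆ P, under m independent draws of realizations (i.e., the product distribution on m-tuples (H_1, …, H_m) of subsets of E, where each H_i has probability Pr(H_i)), the probability that |F(S) − F̂_m(S)| > ε is at most δ, where F̂_m(S) = (1/m) Σ_{i=1}^m f_{H_i}(S). Formally: Σ over all m-tuples (H_1, …, H_m) with |F(S) − (1/m) Σ_i f_{H_i}(S)| > ε of ∏_{i=1}^m Pr(H_i) is at most δ. -/

import Mathlib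

/-!
Every `f_H(S)` lies in `[0, |N|]`, so by Hoeffding's inequality the empirical mean of `m`
independent realizations deviates from `F(S)` by more than `ε` with probability at most
`2 exp (-2 m ε² / |N|²)`, which the choice of `m` makes at most `2 δ / 2^{|P|+1} ≤ δ`.
Over a finite distribution the exponential moment of the sum factorizes as a power, and each
factor is bounded by Hoeffding's lemma applied to the distribution seen as a weighted sum of
Dirac measures.
-/

open Finset

/-- A single transmission step along a live edge of `H`, avoiding the removed vertex set `S`. -/
def MintStep {α : Type*} (H : Finset (α × α)) (S : Finset α) (x y : α) : Prop :=
  (x, y) ∈ H ∧ x ∉ S ∧ y ∉ S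

/-- `u` is reachable from `v` in `H[V \ S]`: there is a directed path (possibly of length 0)
from `v` to `u` using only edges of `H`, all of whose vertices avoid `S`. -/
def MintReach {α : Type*} (H : Finset (α × α)) (S : Finset α) (v u : α) : Prop :=
  v ∉ S ∧ Relation.ReflTransGen (MintStep H S) v u

/-- The realized MINT objective `f_H(S)`: the number of negative nodes (nodes outside `P`)
reachable from some untreated positive node (a node of `P \ S`) in `H[V \ S]`. -/
noncomputable def mintf {α : Type*} [DecidableEq α] (P : Finset α) (H : Finset (α × α))
    (S : Finset α) : ℕ :=
  Set.ncard {u : α | u ∉ P ∧ ∃ v ∈ P \ S, MintReach H S v u}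

/-- The probability of the live-edge realization `H ⊆ E`. -/
def mintPr {α : Type*} [DecidableEq α] (E : Finset (α × α)) (w : α × α → ℝ)
    (H : Finset (α × α)) : ℝ :=
  (∏ e ∈ H, w e) * ∏ e ∈ E \ H, (1 - w e)

/-- The expected MINT objective `F(S) = Σ_{H ⊆ E} Pr(H) · f_H(S)`. -/
noncomputable def mintF {α : Type*} [DecidableEq α] (E : Finset (α × α)) (w : α × α → ℝ)
    (P : Finset α) (S : Finset α) : ℝ :=
  ∑ H ∈ E.powerset, mintPr E w H * (mintf P H S : ℝ)


theorem sum_filter_le_sum_filter_add_sum_filter {β M : Type*} [AddCommMonoid M] [PartialOrder M]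
    [IsOrderedAddMonoid M] {s : Finset β} {f : β → M}
    (hf : ∀ x ∈ s, 0 ≤ f x) {p q r : β → Prop} [DecidablePred p] [DecidablePred q]
    [DecidablePred r] (h : ∀ x ∈ s, p x → q x ∨ r x) :
    ∑ x ∈ s.filter p, f x ≤ ∑ x ∈ s.filter q, f x + ∑ x ∈ s.filter r, f x := by
  rw [sum_filter, sum_filter, sum_filter, ← sum_add_distrib]
  refine sum_le_sum fun x hx => ?_
  have hfx := hf x hx
  split_ifs with hp hq hr hr hq hr hr <;>
    simp only [add_zero, zero_add, le_refl, le_add_of_nonneg_left hfx, add_nonneg hfx hfx, hfx]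
  exact ((h x hx hp).elim hq hr).elim

section FiniteDistribution

open MeasureTheory ProbabilityTheory

variable {ι : Type*} {Ω : Finset ι} {pr X : ι → ℝ} {a b : ℝ}

theorem integral_finsetSum_smul_dirac [MeasurableSpace ι] [MeasurableSingletonClass ι]
    (hpr : ∀ x ∈ Ω, 0 ≤ pr x) (f : ι → ℝ) :
    ∫ x, f x ∂(∑ x ∈ Ω, ENNReal.ofReal (pr x) • Measure.dirac x) =
      ∑ x ∈ Ω, pr x * f x := by
  rw [integral_finsetSum_measure fun x _ => (integrable_dirac enorm_lt_top).smul_measure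
    ENNReal.ofReal_ne_top]
  refine sum_congr rfl fun x hx => ?_
  rw [integral_smul_measure, integral_dirac, ENNReal.toReal_ofReal (hpr x hx), smul_eq_mul]

theorem sum_mul_exp_sub_mean_le (hpr : ∀ x ∈ Ω, 0 ≤ pr x) (hsum : ∑ x ∈ Ω, pr x = 1)
    (hX : ∀ x ∈ Ω, X x ∈ Set.Icc a b) (t : ℝ) :
    ∑ x ∈ Ω, pr x * Real.exp (t * (X x - ∑ y ∈ Ω, pr y * X y)) ≤
      Real.exp ((b - a) ^ 2 * t ^ 2 / 8) := by
  let _ : MeasurableSpace ι := ⊤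
  set μ : Measure ι := ∑ x ∈ Ω, ENNReal.ofReal (pr x) • Measure.dirac x
  have : IsProbabilityMeasure μ := by
    constructor
    simp only [μ, Measure.coe_finsetSum, Finset.sum_apply, Measure.smul_apply,
      measure_univ, smul_eq_mul, mul_one]
    rw [← ENNReal.ofReal_sum_of_nonneg hpr, hsum, ENNReal.ofReal_one]
  have hXμ : ∀ᵐ x ∂μ, X x ∈ Set.Icc a b := by
    rw [ae_iff]
    simp only [μ, Measure.coe_finsetSum, Finset.sum_apply, Measure.smul_apply, smul_eq_mul]
    refine sum_eq_zero fun x hx => ?_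
    rw [Measure.dirac_apply' x (MeasurableSet.of_discrete),
      Set.indicator_of_notMem (not_not_intro (hX x hx)), mul_zero]
  have hmean : μ[X] = ∑ y ∈ Ω, pr y * X y := integral_finsetSum_smul_dirac hpr X
  have h := (hasSubgaussianMGF_of_mem_Icc (Measurable.of_discrete).aemeasurable hXμ).mgf_le t
  rw [mgf, hmean, integral_finsetSum_smul_dirac hpr] at h
  refine h.trans_eq (congrArg Real.exp ?_)
  simp only [NNReal.coe_pow, NNReal.coe_div, coe_nnnorm, Real.norm_eq_abs, NNReal.coe_ofNat,
    div_pow, sq_abs]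
  ring

theorem sum_piFinset_prod_mul_exp_sum (Ω : Finset ι) (pr Y : ι → ℝ) (t : ℝ) (m : ℕ) :
    ∑ xs ∈ Fintype.piFinset (fun _ : Fin m => Ω),
        (∏ i, pr (xs i)) * Real.exp (t * ∑ i, Y (xs i)) =
      (∑ x ∈ Ω, pr x * Real.exp (t * Y x)) ^ m := by
  rw [← Fin.prod_const, prod_univ_sum]
  refine sum_congr rfl fun xs _ => ?_
  rw [prod_mul_distrib, mul_sum, Real.exp_sum]

theorem sum_prod_filter_le_sum_sub_mean_le (hpr : ∀ x ∈ Ω, 0 ≤ pr x) (hsum : ∑ x ∈ Ω, pr x = 1)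
    (hX : ∀ x ∈ Ω, X x ∈ Set.Icc a b) (hab : a < b) {ε : ℝ} (hε : 0 ≤ ε) (m : ℕ) :
    ∑ xs ∈ (Fintype.piFinset fun _ : Fin m => Ω).filter
        (fun xs => m * ε ≤ ∑ i, (X (xs i) - ∑ y ∈ Ω, pr y * X y)),
      ∏ i, pr (xs i) ≤ Real.exp (-(2 * m * ε ^ 2 / (b - a) ^ 2)) := by
  set μX := ∑ y ∈ Ω, pr y * X y
  -- the minimiser of `-t m ε + m (b - a)² t² / 8`
  set t := 4 * ε / (b - a) ^ 2
  have ht : 0 ≤ t := by positivity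
  have hprod : ∀ xs ∈ Fintype.piFinset (fun _ : Fin m => Ω), 0 ≤ ∏ i, pr (xs i) := fun xs hxs =>
    prod_nonneg fun i _ => hpr _ (Fintype.mem_piFinset.mp hxs i)
  calc _ ≤ ∑ xs ∈ Fintype.piFinset (fun _ : Fin m => Ω),
        Real.exp (-(t * (m * ε))) * ((∏ i, pr (xs i)) * Real.exp (t * ∑ i, (X (xs i) - μX))) := by
        rw [sum_filter]
        refine sum_le_sum fun xs hxs => ?_
        split_ifs with hdev
        · rw [mul_left_comm, ← Real.exp_add]
          refine le_mul_of_one_le_right (hprod xs hxs) (Real.one_le_exp ?_)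
          nlinarith
        · exact mul_nonneg (Real.exp_nonneg _) (mul_nonneg (hprod xs hxs) (Real.exp_nonneg _))
    _ = Real.exp (-(t * (m * ε))) * (∑ x ∈ Ω, pr x * Real.exp (t * (X x - μX))) ^ m := by
        rw [← mul_sum, sum_piFinset_prod_mul_exp_sum Ω pr (fun x => X x - μX)]
    _ ≤ Real.exp (-(t * (m * ε))) * Real.exp ((b - a) ^ 2 * t ^ 2 / 8) ^ m := by
        gcongr
        · exact sum_nonneg fun x hx => mul_nonneg (hpr x hx) (Real.exp_nonneg _)
        · exact sum_mul_exp_sub_mean_le hpr hsum hX t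
    _ = Real.exp (-(2 * m * ε ^ 2 / (b - a) ^ 2)) := by
        rw [← Real.exp_nat_mul, ← Real.exp_add]
        congr 1
        simp only [t]
        field_simp
        ring

theorem sum_prod_filter_lt_abs_mean_sub_le (hpr : ∀ x ∈ Ω, 0 ≤ pr x) (hsum : ∑ x ∈ Ω, pr x = 1)
    (hX : ∀ x ∈ Ω, X x ∈ Set.Icc a b) (hab : a < b) {ε : ℝ} (hε : 0 ≤ ε) {m : ℕ} (hm : 0 < m) :
    ∑ xs ∈ (Fintype.piFinset fun _ : Fin m => Ω).filter
        (fun xs => ε < |∑ y ∈ Ω, pr y * X y - 1 / (m : ℝ) * ∑ i, X (xs i)|),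
      ∏ i, pr (xs i) ≤ 2 * Real.exp (-(2 * m * ε ^ 2 / (b - a) ^ 2)) := by
  have upper := sum_prod_filter_le_sum_sub_mean_le hpr hsum hX hab hε m
  have lower := sum_prod_filter_le_sum_sub_mean_le (X := fun x => -X x) hpr hsum
    (fun x hx => ⟨neg_le_neg (hX x hx).2, neg_le_neg (hX x hx).1⟩) (neg_lt_neg hab) hε m
  rw [neg_sub_neg] at lower
  have hmR : (0 : ℝ) < m := Nat.cast_pos.mpr hm
  have hsplit : ∀ xs ∈ Fintype.piFinset (fun _ : Fin m => Ω),
      ε < |∑ y ∈ Ω, pr y * X y - 1 / (m : ℝ) * ∑ i, X (xs i)| →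
      m * ε ≤ ∑ i, (X (xs i) - ∑ y ∈ Ω, pr y * X y) ∨
        m * ε ≤ ∑ i, (-X (xs i) - ∑ y ∈ Ω, pr y * -X y) := by
    intro xs _ hdev
    have hmean : (m : ℝ) * (1 / m * ∑ i, X (xs i)) = ∑ i, X (xs i) := by field_simp
    simp only [sum_sub_distrib, sum_const, card_univ, Fintype.card_fin, nsmul_eq_mul, mul_neg,
      sum_neg_distrib]
    rcases lt_abs.mp hdev with h | h
    · right; nlinarith [mul_lt_mul_of_pos_left h hmR]
    · left; nlinarith [mul_lt_mul_of_pos_left h hmR]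
  refine (sum_filter_le_sum_filter_add_sum_filter (fun xs hxs => prod_nonneg fun i _ =>
    hpr _ (Fintype.mem_piFinset.mp hxs i)) hsplit).trans ?_
  exact (add_le_add upper lower).trans_eq (two_mul _).symm

end FiniteDistribution

theorem mintPr_nonneg {α : Type*} [DecidableEq α] {E : Finset (α × α)} {w : α × α → ℝ}
    (hw : ∀ e ∈ E, 0 ≤ w e ∧ w e ≤ 1) {H : Finset (α × α)} (hH : H ⊆ E) : 0 ≤ mintPr E w H :=
  mul_nonneg (prod_nonneg fun e he => (hw e (hH he)).1)
    (prod_nonneg fun e he => sub_nonneg.mpr (hw e (mem_sdiff.mp he).1).2)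

theorem sum_mintPr_powerset {α : Type*} [DecidableEq α] (E : Finset (α × α)) (w : α × α → ℝ) :
    ∑ H ∈ E.powerset, mintPr E w H = 1 := by
  calc ∑ H ∈ E.powerset, mintPr E w H = ∏ e ∈ E, (w e + (1 - w e)) := (prod_add _ _ E).symm
    _ = 1 := prod_eq_one fun e _ => add_sub_cancel _ 1

theorem mintf_le_card_compl {α : Type*} [Fintype α] [DecidableEq α] (P : Finset α)
    (H : Finset (α × α)) (S : Finset α) : mintf P H S ≤ Pᶜ.card := by
  rw [← Set.ncard_coe_finset]
  exact Set.ncard_le_ncard (fun u hu => by simpa using hu.1) (Pᶜ).finite_toSet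

theorem two_mul_exp_neg_le_of_log_le {δ c : ℝ} (k : ℕ) (hδ : 0 < δ)
    (h : Real.log (2 ^ (k + 1) / δ) ≤ c) : 2 * Real.exp (-c) ≤ δ := by
  calc 2 * Real.exp (-c) ≤ 2 * Real.exp (-Real.log (2 ^ (k + 1) / δ)) := by gcongr
    _ = δ / 2 ^ k := by
        rw [Real.exp_neg, Real.exp_log (by positivity), inv_div, pow_succ]
        field_simp
    _ ≤ δ := div_le_self hδ.le (one_le_pow₀ one_le_two)

open Classical in
theorem stmt9_general {α : Type*} [Fintype α] [DecidableEq α] (E : Finset (α × α))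
    (w : α × α → ℝ) (hw : ∀ e ∈ E, 0 ≤ w e ∧ w e ≤ 1)
    (P : Finset α) (hN : (Pᶜ : Finset α).Nonempty)
    (ε δ : ℝ) (hε : 0 < ε) (hδ0 : 0 < δ) (hδ1 : δ < 1)
    (m : ℕ)
    (hm : m = ⌈((Pᶜ.card : ℝ) ^ 2 / (2 * ε ^ 2)) * Real.log ((2 : ℝ) ^ (P.card + 1) / δ)⌉₊)
    (S : Finset α) :
    ∑ Hs ∈ (Fintype.piFinset fun _ : Fin m => E.powerset).filter
        (fun Hs : Fin m → Finset (α × α) =>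
          ε < |mintF E w P S - (1 / (m : ℝ)) * ∑ i : Fin m, (mintf P (Hs i) S : ℝ)|),
      ∏ i : Fin m, mintPr E w (Hs i) ≤ δ := by
  have hn : (0 : ℝ) < Pᶜ.card := by exact_mod_cast hN.card_pos
  have hlog : 0 < Real.log ((2 : ℝ) ^ (P.card + 1) / δ) :=
    Real.log_pos ((one_lt_div hδ0).mpr (hδ1.trans_le (one_le_pow₀ one_le_two)))
  have hm0 : 0 < m := hm ▸ Nat.ceil_pos.mpr (by positivity)
  have hsample :
      Real.log ((2 : ℝ) ^ (P.card + 1) / δ) ≤ 2 * m * ε ^ 2 / (Pᶜ.card - 0 : ℝ) ^ 2 := by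
    have hceil := hm ▸ Nat.le_ceil (((Pᶜ.card : ℝ) ^ 2 / (2 * ε ^ 2)) *
      Real.log ((2 : ℝ) ^ (P.card + 1) / δ))
    rw [sub_zero, le_div_iff₀ (by positivity)]
    rw [div_mul_eq_mul_div, div_le_iff₀ (by positivity)] at hceil
    linarith
  calc _ ≤ 2 * Real.exp (-(2 * m * ε ^ 2 / (Pᶜ.card - 0 : ℝ) ^ 2)) :=
        sum_prod_filter_lt_abs_mean_sub_le (fun H hH => mintPr_nonneg hw (mem_powerset.mp hH))
          (sum_mintPr_powerset E w)
          (fun H _ => ⟨Nat.cast_nonneg _, by exact_mod_cast mintf_le_card_compl P H S⟩) hn hε.le hm0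
    _ ≤ δ := two_mul_exp_neg_le_of_log_le _ hδ0 hsample

open Classical in
/-- Hoeffding-style sample bound: with
`m = ⌈(|N|² / (2ε²)) · ln(2^{|P|+1} / δ)⌉` samples, for any fixed `S ⊆ P`, under `m`
independent draws of realizations the probability that `|F(S) - F̂_m(S)| > ε` is at most
`δ`, where `F̂_m(S) = (1/m) Σ_{i=1}^m f_{H_i}(S)`. -/
theorem stmt9 {α : Type*} [Fintype α] [DecidableEq α] (E : Finset (α × α))
    (w : α × α → ℝ) (hw : ∀ e ∈ E, 0 ≤ w e ∧ w e ≤ 1)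
    (P : Finset α) (hinc : ∀ e ∈ E, e.2 ∉ P) (hN : (Pᶜ : Finset α).Nonempty)
    (ε δ : ℝ) (hε : 0 < ε) (hδ0 : 0 < δ) (hδ1 : δ < 1)
    (m : ℕ)
    (hm : m = ⌈((Pᶜ.card : ℝ) ^ 2 / (2 * ε ^ 2)) * Real.log ((2 : ℝ) ^ (P.card + 1) / δ)⌉₊)
    (S : Finset α) (hS : S ⊆ P) :
    ∑ Hs ∈ (Fintype.piFinset fun _ : Fin m => E.powerset).filter
        (fun Hs : Fin m → Finset (α × α) =>
          ε < |mintF E w P S - (1 / (m : ℝ)) * ∑ i : Fin m, (mintf P (Hs i) S : ℝ)|),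
      ∏ i : Fin m, mintPr E w (Hs i) ≤ δ :=
  stmt9_general E w hw P hN ε δ hε hδ0 hδ1 m hm S
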